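/- For all c > 0 and y > 0, the function θ ↦ e^{−yθ}·(√c/θ)·J₁(2θ√c) (extended by the value c at θ = 0) is integrable on [0,∞) and ∫₀^∞ e^{−yθ}·(√c/θ)·J₁(2θ√c) dθ = (−y + √(y² + 4c))/2. (Laplace transform computation in the proof of Theorem 3.2 of the paper.) -/

import Mathlib

/-!
With `A θ = J₀(2θ√c)` and `B θ = θ F_c(θ) = √c J₁(2θ√c)`, the Bessel recurrences `J₀' = -J₁`,
`(x J₁)' = x J₀` give the first-order system `A' = -2B`, `B' = 2cA - F_c`, while `|A| ≤ 1`,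
`|B| ≤ √c` and `|F_c| ≤ c` on `[0, ∞)` (because `J₀² + J₁²` decreases and `|x J₁ x| ≤ x²/2`).
Integrating by parts against `e^{-yθ}` and eliminating the Laplace transform `L[A]` gives
`(y² + 4c) L[θ F_c] = 2c - y L[F_c]`; as `L[F_c]' = -L[θ F_c]`, the transform `G = L[F_c]` solves
`(y² + 4c) G' = y G - 2c` on `(0, ∞)`. So does `(-y + √(y² + 4c))/2`, and the difference `D` of the
two satisfies `(y² + 4c) D' = y D`: `D / √(y² + 4c)` is constant, and it tends to `0` because `D` is
bounded, so `D = 0`.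
-/

open MeasureTheory Real Filter Set Topology

noncomputable def J0 (x : ℝ) : ℝ :=
  ∑' k : ℕ, (-1 : ℝ) ^ k * (x / 2) ^ (2 * k) / ((Nat.factorial k : ℝ)) ^ 2

noncomputable def J1 (x : ℝ) : ℝ :=
  ∑' k : ℕ, (-1 : ℝ) ^ k * (x / 2) ^ (2 * k + 1) /
    ((Nat.factorial k : ℝ) * (Nat.factorial (k + 1) : ℝ))

noncomputable def Fc (c : ℝ) (θ : ℝ) : ℝ :=
  if θ = 0 then c else Real.sqrt c / θ * J1 (2 * θ * Real.sqrt c)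

section PowerSeries

variable {a : ℕ → ℝ} {e : ℕ → ℕ}

theorem summable_abs_mul_pow_of_abs_le_inv_factorial (ha : ∀ k, |a k| ≤ 1 / k.factorial)
    (he : ∀ k, e k ≤ 2 * k + 2) (r : ℝ) : Summable fun k => |a k * r ^ e k| := by
  set M := |r| + 1
  have hM : 1 ≤ M := by simp [M]
  refine .of_nonneg_of_le (fun _ => abs_nonneg _) (fun k => ?_)
    ((Real.summable_pow_div_factorial (M ^ 2)).mul_left (M ^ 2))
  calc |a k * r ^ e k| = |a k| * |r| ^ e k := by rw [abs_mul, abs_pow]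
    _ ≤ 1 / k.factorial * M ^ (2 * k + 2) := by
        gcongr
        · exact ha k
        · exact (pow_le_pow_left₀ (abs_nonneg r) (by simp [M]) _).trans
            (pow_le_pow_right₀ hM (he k))
    _ = M ^ 2 * ((M ^ 2) ^ k / k.factorial) := by rw [← pow_mul]; ring

theorem hasDerivAt_tsum_mul_pow (ha : ∀ r, Summable fun k => |a k * r ^ e k|) (x : ℝ) :
    HasDerivAt (fun x => ∑' k, a k * x ^ e k) (∑' k, a k * e k * x ^ (e k - 1)) x := by
  set R := |x| + 1
  have hR : 1 ≤ R := by simp [R]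
  have hderiv_le : ∀ k, ∀ y ∈ Metric.ball (0 : ℝ) R,
      ‖a k * e k * y ^ (e k - 1)‖ ≤ |a k * (2 * R) ^ e k| := by
    intro k y hy
    rw [mem_ball_zero_iff, Real.norm_eq_abs] at hy
    have hek : (e k : ℝ) ≤ 2 ^ e k := by exact_mod_cast (Nat.lt_two_pow_self (n := e k)).le
    rw [Real.norm_eq_abs, abs_mul, abs_mul, abs_mul, abs_pow, abs_pow, Nat.abs_cast,
      abs_of_nonneg (by positivity : (0 : ℝ) ≤ 2 * R), mul_assoc, mul_pow]
    gcongr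
    exact (pow_le_pow_left₀ (abs_nonneg y) hy.le _).trans (pow_le_pow_right₀ hR (Nat.sub_le _ _))
  have hmem : x ∈ Metric.ball (0 : ℝ) R := by simp [R]
  refine hasDerivAt_tsum_of_isPreconnected (g' := fun k y => a k * e k * y ^ (e k - 1))
    (ha (2 * R)) Metric.isOpen_ball (convex_ball 0 R).isPreconnected
    (fun k y _ => ((hasDerivAt_pow (e k) y).const_mul (a k)).congr_deriv (by ring))
    hderiv_le (Metric.mem_ball_self (by positivity)) (ha 0).of_abs hmem

end PowerSeries

noncomputable def J0coeff (k : ℕ) : ℝ := (-1) ^ k / (k.factorial : ℝ) ^ 2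

noncomputable def J1coeff (k : ℕ) : ℝ := (-1) ^ k / (k.factorial * (k + 1).factorial : ℝ)

theorem J0_eq_tsum (x : ℝ) : J0 x = ∑' k, J0coeff k * (x / 2) ^ (2 * k) :=
  tsum_congr fun k => by rw [J0coeff]; ring

theorem J1_eq_tsum (x : ℝ) : J1 x = ∑' k, J1coeff k * (x / 2) ^ (2 * k + 1) :=
  tsum_congr fun k => by rw [J1coeff]; ring

theorem abs_J0coeff_le (k : ℕ) : |J0coeff k| ≤ 1 / k.factorial := by
  have hk : (1 : ℝ) ≤ k.factorial := by exact_mod_cast k.factorial_pos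
  rw [J0coeff, abs_div, abs_pow, abs_neg, abs_one, one_pow, abs_of_pos (by positivity), sq]
  gcongr
  exact le_mul_of_one_le_left (by positivity) hk

theorem abs_J1coeff_le (k : ℕ) : |J1coeff k| ≤ 1 / k.factorial := by
  have hk : (1 : ℝ) ≤ (k + 1).factorial := by exact_mod_cast (k + 1).factorial_pos
  rw [J1coeff, abs_div, abs_pow, abs_neg, abs_one, one_pow, abs_of_pos (by positivity)]
  gcongr
  exact le_mul_of_one_le_right (by positivity) hk

theorem hasDerivAt_tsum_mul_half_pow {a : ℕ → ℝ} {e : ℕ → ℕ}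
    (ha : ∀ k, |a k| ≤ 1 / k.factorial) (he : ∀ k, e k ≤ 2 * k + 2) (x : ℝ) :
    HasDerivAt (fun x => ∑' k, a k * (x / 2) ^ e k)
      ((∑' k, a k * e k * (x / 2) ^ (e k - 1)) / 2) x := by
  refine ((hasDerivAt_tsum_mul_pow (summable_abs_mul_pow_of_abs_le_inv_factorial ha he)
    (x / 2)).comp x ((hasDerivAt_id' x).div_const 2)).congr_deriv ?_
  ring

theorem hasDerivAt_J0 (x : ℝ) : HasDerivAt J0 (-J1 x) x := by
  have h := hasDerivAt_tsum_mul_half_pow abs_J0coeff_le (e := fun k => 2 * k) (by omega) x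
  rw [show (fun x => ∑' k, J0coeff k * (x / 2) ^ (2 * k)) = J0 from
    funext fun x => (J0_eq_tsum x).symm] at h
  refine h.congr_deriv ?_
  have hzero : ∀ k ∉ Set.range Nat.succ,
      J0coeff k * ((2 * k : ℕ) : ℝ) * (x / 2) ^ (2 * k - 1) = 0 := by
    intro k hk
    obtain rfl : k = 0 := by simpa [Nat.range_succ] using hk
    simp
  rw [← Nat.succ_injective.tsum_eq (Function.support_subset_iff'.mpr hzero), J1_eq_tsum,
    ← tsum_div_const, ← tsum_neg]
  refine tsum_congr fun k => ?_
  rw [show 2 * (k + 1) - 1 = 2 * k + 1 by omega, J0coeff, J1coeff, pow_succ (-1 : ℝ)]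
  push_cast [Nat.factorial_succ]
  field_simp

theorem hasDerivAt_mul_J1 (x : ℝ) : HasDerivAt (fun x => x * J1 x) (x * J0 x) x := by
  have h := (hasDerivAt_tsum_mul_half_pow abs_J1coeff_le (e := fun k => 2 * k + 2)
    (fun k => le_rfl) x).const_mul 2
  rw [show (fun x => 2 * ∑' k, J1coeff k * (x / 2) ^ (2 * k + 2)) = fun x => x * J1 x from
    funext fun x => by
      rw [J1_eq_tsum, ← tsum_mul_left, ← tsum_mul_left]
      exact tsum_congr fun k => by ring] at h
  refine h.congr_deriv ?_
  rw [J0_eq_tsum, ← tsum_mul_left, ← tsum_div_const, ← tsum_mul_left]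
  refine tsum_congr fun k => ?_
  rw [show 2 * k + 2 - 1 = 2 * k + 1 by omega, J0coeff, J1coeff]
  push_cast [Nat.factorial_succ]
  field_simp
  ring

theorem continuous_J0 : Continuous J0 :=
  continuous_iff_continuousAt.mpr fun x => (hasDerivAt_J0 x).continuousAt

theorem continuous_J1 : Continuous J1 := by
  rw [show J1 = fun x => ∑' k, J1coeff k * (x / 2) ^ (2 * k + 1) from funext J1_eq_tsum]
  exact continuous_iff_continuousAt.mpr fun x =>
    (hasDerivAt_tsum_mul_half_pow abs_J1coeff_le (fun k => by omega) x).continuousAt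

theorem J0_zero : J0 0 = 1 := by
  rw [J0, tsum_eq_single 0 fun k hk => by simp [hk]]
  simp

theorem J1_zero : J1 0 = 0 := by
  simp [J1]

theorem hasDerivAt_J1 {x : ℝ} (hx : x ≠ 0) : HasDerivAt J1 (J0 x - J1 x / x) x := by
  have h := (hasDerivAt_mul_J1 x).div (hasDerivAt_id x) hx
  refine (h.congr_of_eventuallyEq ?_).congr_deriv ?_
  · filter_upwards [eventually_ne_nhds hx] with y hy
    simp [mul_div_cancel_left₀ _ hy]
  · simp only [id]
    field_simp

theorem sq_J0_add_sq_J1_le_one {x : ℝ} (hx : 0 ≤ x) : J0 x ^ 2 + J1 x ^ 2 ≤ 1 := by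
  have hanti : AntitoneOn (fun x => J0 x ^ 2 + J1 x ^ 2) (Ici 0) := by
    refine antitoneOn_of_hasDerivWithinAt_nonpos (convex_Ici 0)
      ((continuous_J0.pow 2).add (continuous_J1.pow 2)).continuousOn
      (f' := fun x => -(2 * J1 x ^ 2 / x)) (fun x hx => ?_) (fun x hx => ?_)
    · rw [interior_Ici] at hx
      refine (((hasDerivAt_J0 x).pow 2).add ((hasDerivAt_J1 hx.ne').pow 2)).hasDerivWithinAt
        |>.congr_deriv ?_
      field_simp
      ring
    · rw [interior_Ici] at hx
      have := hx.out
      exact neg_nonpos.mpr (by positivity)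
  simpa [J0_zero, J1_zero] using hanti self_mem_Ici hx hx

theorem abs_J0_le_one {x : ℝ} (hx : 0 ≤ x) : |J0 x| ≤ 1 :=
  sq_le_one_iff_abs_le_one _ |>.mp (by nlinarith [sq_J0_add_sq_J1_le_one hx, sq_nonneg (J1 x)])

theorem abs_J1_le_one {x : ℝ} (hx : 0 ≤ x) : |J1 x| ≤ 1 :=
  sq_le_one_iff_abs_le_one _ |>.mp (by nlinarith [sq_J0_add_sq_J1_le_one hx, sq_nonneg (J0 x)])

theorem abs_J1_le {x : ℝ} (hx : 0 ≤ x) : |J1 x| ≤ x / 2 := by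
  have h : ‖x * J1 x‖ ≤ x ^ 2 / 2 :=
    image_norm_le_of_norm_deriv_right_le_deriv_boundary (a := 0) (B' := id)
      (fun t _ => (hasDerivAt_mul_J1 t).continuousAt.continuousWithinAt)
      (fun t _ => (hasDerivAt_mul_J1 t).hasDerivWithinAt) (by simp)
      (fun t => ((hasDerivAt_pow 2 t).div_const 2).congr_deriv (by simp))
      (fun t ht => ?_) ⟨hx, le_rfl⟩
  · rcases hx.eq_or_lt with rfl | hpos
    · simp [J1_zero]
    · rw [Real.norm_eq_abs, abs_mul, abs_of_pos hpos] at h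
      nlinarith
  · rw [Real.norm_eq_abs, abs_mul, abs_of_nonneg ht.1]
    exact mul_le_of_le_one_right ht.1 (abs_J0_le_one ht.1)

section Fc

variable {c θ : ℝ}

theorem mul_Fc (c θ : ℝ) : θ * Fc c θ = √c * J1 (2 * θ * √c) := by
  rcases eq_or_ne θ 0 with rfl | hθ
  · simp [J1_zero]
  · rw [Fc, if_neg hθ]
    field_simp

theorem abs_Fc_le (hc : 0 ≤ c) (hθ : 0 ≤ θ) : |Fc c θ| ≤ c := by
  rcases hθ.eq_or_lt with rfl | hpos
  · simp [Fc, abs_of_nonneg hc]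
  · have hJ := abs_J1_le (x := 2 * θ * √c) (by positivity)
    rw [Fc, if_neg hpos.ne', abs_mul, abs_div, abs_of_nonneg (Real.sqrt_nonneg c),
      abs_of_pos hpos]
    calc √c / θ * |J1 (2 * θ * √c)| ≤ √c / θ * (2 * θ * √c / 2) := by gcongr
      _ = c := by field_simp; rw [Real.sq_sqrt hc]

theorem abs_mul_Fc_le (hθ : 0 ≤ θ) : |θ * Fc c θ| ≤ √c := by
  rw [mul_Fc, abs_mul, abs_of_nonneg (Real.sqrt_nonneg c)]
  exact mul_le_of_le_one_right (Real.sqrt_nonneg c) (abs_J1_le_one (by positivity))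

theorem continuousOn_Fc : ContinuousOn (Fc c) (Ioi 0) := by
  refine ContinuousOn.congr (f := fun θ => √c / θ * J1 (2 * θ * √c)) ?_
    fun θ hθ => if_neg (ne_of_gt hθ)
  exact (continuousOn_const.div continuousOn_id fun θ hθ => ne_of_gt hθ).mul
    (continuous_J1.comp (by fun_prop)).continuousOn

theorem hasDerivAt_J0_two_mul_sqrt (c θ : ℝ) :
    HasDerivAt (fun θ => J0 (2 * θ * √c)) (-2 * (θ * Fc c θ)) θ := by
  refine ((hasDerivAt_J0 _).comp θ (((hasDerivAt_id' θ).const_mul 2).mul_const √c))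
    |>.congr_deriv ?_
  rw [mul_Fc]
  ring

theorem hasDerivAt_mul_Fc (hc : 0 < c) (hθ : θ ≠ 0) :
    HasDerivAt (fun θ => θ * Fc c θ) (2 * c * J0 (2 * θ * √c) - Fc c θ) θ := by
  have hs : 0 < √c := Real.sqrt_pos.mpr hc
  rw [funext (mul_Fc c)]
  refine ((hasDerivAt_J1 (by positivity)).comp θ
    (((hasDerivAt_id' θ).const_mul 2).mul_const √c) |>.const_mul √c).congr_deriv ?_
  rw [Fc, if_neg hθ]
  field_simp
  linear_combination 2 * θ * J0 (√c * 2 * θ) * Real.mul_self_sqrt hc.le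

end Fc

noncomputable def laplaceTransform (f : ℝ → ℝ) (z : ℝ) : ℝ := ∫ θ in Ioi 0, exp (-z * θ) * f θ

section Laplace

variable {f g g' : ℝ → ℝ} {M M' z : ℝ}

theorem abs_exp_mul_le {a b : ℝ} (h : |b| ≤ M) : |exp a * b| ≤ M * exp a := by
  rw [abs_mul, abs_of_pos (exp_pos a), mul_comm]
  exact mul_le_mul_of_nonneg_right h (exp_pos a).le

theorem integrableOn_exp_neg_mul_mul (hf : AEStronglyMeasurable f (volume.restrict (Ioi 0)))
    (hfM : ∀ θ > 0, |f θ| ≤ M) (hz : 0 < z) :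
    IntegrableOn (fun θ => exp (-z * θ) * f θ) (Ioi 0) := by
  refine Integrable.mono' ((exp_neg_integrableOn_Ioi 0 hz).const_mul M)
    ((continuous_exp.comp (by fun_prop)).aestronglyMeasurable.mul hf) ?_
  filter_upwards [ae_restrict_mem measurableSet_Ioi] with θ hθ
  rw [Real.norm_eq_abs]
  exact abs_exp_mul_le (hfM θ hθ)

theorem abs_laplaceTransform_le (hfM : ∀ θ > 0, |f θ| ≤ M) (hz : 0 < z) :
    |laplaceTransform f z| ≤ M / z := by
  have h := norm_integral_le_of_norm_le (f := fun θ => exp (-z * θ) * f θ)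
    ((exp_neg_integrableOn_Ioi 0 hz).const_mul M) ((ae_restrict_mem measurableSet_Ioi).mono
      fun θ hθ => (Real.norm_eq_abs _).trans_le (abs_exp_mul_le (hfM θ hθ)))
  rw [integral_const_mul, integral_exp_mul_Ioi (neg_neg_iff_pos.mpr hz)] at h
  simpa [laplaceTransform, div_eq_mul_inv] using h

theorem tendsto_exp_neg_mul_mul_atTop (hfM : ∀ θ > 0, |f θ| ≤ M) (hz : 0 < z) :
    Tendsto (fun θ => exp (-z * θ) * f θ) atTop (𝓝 0) := by
  have hexp : Tendsto (fun θ => M * exp (-z * θ)) atTop (𝓝 0) := by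
    simpa using (tendsto_exp_atBot.comp
      (tendsto_id.const_mul_atTop_of_neg (neg_neg_iff_pos.mpr hz))).const_mul M
  exact squeeze_zero_norm' ((eventually_gt_atTop 0).mono fun θ hθ => abs_exp_mul_le (hfM θ hθ))
    hexp

theorem laplaceTransform_const_mul (a : ℝ) (f : ℝ → ℝ) (z : ℝ) :
    laplaceTransform (fun θ => a * f θ) z = a * laplaceTransform f z := by
  simp_rw [laplaceTransform, mul_left_comm _ a, integral_const_mul]

theorem laplaceTransform_sub (hf : IntegrableOn (fun θ => exp (-z * θ) * f θ) (Ioi 0))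
    (hg : IntegrableOn (fun θ => exp (-z * θ) * g θ) (Ioi 0)) :
    laplaceTransform (fun θ => f θ - g θ) z = laplaceTransform f z - laplaceTransform g z := by
  simp_rw [laplaceTransform, mul_sub, integral_sub hf hg]

theorem laplaceTransform_of_hasDerivAt (hg0 : ContinuousWithinAt g (Ici 0) 0)
    (hg : ∀ θ > 0, HasDerivAt g (g' θ) θ) (hgM : ∀ θ > 0, |g θ| ≤ M)
    (hg' : AEStronglyMeasurable g' (volume.restrict (Ioi 0))) (hg'M : ∀ θ > 0, |g' θ| ≤ M')
    (hz : 0 < z) : laplaceTransform g' z = z * laplaceTransform g z - g 0 := by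
  have hint := integrableOn_exp_neg_mul_mul
    (ContinuousOn.aestronglyMeasurable (fun θ hθ => (hg θ hθ).continuousAt.continuousWithinAt)
      measurableSet_Ioi) hgM hz
  have hint' := integrableOn_exp_neg_mul_mul hg' hg'M hz
  have h := integral_Ioi_of_hasDerivAt_of_tendsto (f := fun θ => exp (-z * θ) * g θ)
    (f' := fun θ => exp (-z * θ) * g' θ - z * (exp (-z * θ) * g θ))
    ((continuous_exp.comp (by fun_prop)).continuousWithinAt.mul hg0)
    (fun θ hθ => (((hasDerivAt_id' θ).const_mul (-z)).exp.mul (hg θ hθ)).congr_deriv (by ring))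
    (hint'.sub (hint.const_mul z)) (tendsto_exp_neg_mul_mul_atTop hgM hz)
  rw [integral_sub hint' (hint.const_mul z), integral_const_mul] at h
  simp only [mul_zero, exp_zero, one_mul, zero_sub] at h
  simp only [laplaceTransform]
  linarith

theorem hasDerivAt_laplaceTransform (hf : AEStronglyMeasurable f (volume.restrict (Ioi 0)))
    (hfM : ∀ θ > 0, |f θ| ≤ M) (hfM' : ∀ θ > 0, |θ * f θ| ≤ M') (hz : 0 < z) :
    HasDerivAt (laplaceTransform f) (-laplaceTransform (fun θ => θ * f θ) z) z := by
  have hM' : 0 ≤ M' := (abs_nonneg _).trans (hfM' 1 one_pos)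
  have hderiv := hasDerivAt_integral_of_dominated_loc_of_deriv_le
    (μ := volume.restrict (Ioi 0)) (F := fun w θ => exp (-w * θ) * f θ)
    (F' := fun w θ => -(exp (-w * θ) * (θ * f θ)))
    (bound := fun θ => M' * exp (-(z / 2) * θ)) (Metric.ball_mem_nhds z (half_pos hz))
    (.of_forall fun w => (continuous_exp.comp (by fun_prop)).aestronglyMeasurable.mul hf)
    (integrableOn_exp_neg_mul_mul hf hfM hz)
    ((continuous_exp.comp (by fun_prop)).aestronglyMeasurable.mul
      (continuous_id.aestronglyMeasurable.mul hf)).neg ?_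
    ((exp_neg_integrableOn_Ioi 0 (half_pos hz)).const_mul M')
    (.of_forall fun θ w _ => (((hasDerivAt_neg' w).mul_const θ).exp.mul_const (f θ)).congr_deriv
      (by ring))
  · exact hderiv.2.congr_deriv (integral_neg _)
  · filter_upwards [ae_restrict_mem measurableSet_Ioi] with θ (hθ : 0 < θ) w hw
    have hw : z / 2 < w := by
      rw [Metric.mem_ball, Real.dist_eq, abs_lt] at hw
      linarith [hw.1]
    rw [norm_neg, Real.norm_eq_abs]
    refine (abs_exp_mul_le (hfM' θ hθ)).trans (mul_le_mul_of_nonneg_left ?_ hM')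
    exact exp_le_exp.mpr (by nlinarith)

end Laplace

theorem eq_zero_of_hasDerivAt_eq_mul_div_of_bounded {a M : ℝ} {D : ℝ → ℝ} (ha : 0 ≤ a)
    (hD : ∀ y > 0, HasDerivAt D (y * D y / (y ^ 2 + a)) y) (hM : ∀ y ≥ 1, |D y| ≤ M)
    {y : ℝ} (hy : 0 < y) : D y = 0 := by
  have hsqrt : ∀ y > 0, 0 < √(y ^ 2 + a) := fun y hy => Real.sqrt_pos.mpr (by positivity)
  have hΦ : ∀ y > 0, HasDerivAt (fun y => D y / √(y ^ 2 + a)) 0 y := by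
    intro y hy
    have hs := hsqrt y hy
    refine ((hD y hy).div (((hasDerivAt_pow 2 y).add_const a).sqrt (by positivity))
      hs.ne').congr_deriv ?_
    field_simp
    rw [Real.sq_sqrt (by positivity)]
    ring
  have hconst : ∀ t > 0, D t / √(t ^ 2 + a) = D y / √(y ^ 2 + a) := fun t ht =>
    isOpen_Ioi.is_const_of_deriv_eq_zero isPreconnected_Ioi
      (fun x hx => (hΦ x hx).differentiableAt.differentiableWithinAt)
      (fun x hx => (hΦ x hx).deriv) ht hy
  have hlim : Tendsto (fun t => D t / √(t ^ 2 + a)) atTop (𝓝 0) := by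
    have hM0 : 0 ≤ M := (abs_nonneg _).trans (hM 1 le_rfl)
    refine squeeze_zero_norm' (a := fun t => M / t) ((eventually_ge_atTop 1).mono fun t ht => ?_)
      (tendsto_const_nhds.div_atTop tendsto_id)
    have ht0 : 0 < t := by linarith
    rw [Real.norm_eq_abs, abs_div, abs_of_pos (hsqrt t ht0)]
    calc |D t| / √(t ^ 2 + a) ≤ M / √(t ^ 2 + a) := by gcongr; exact hM t ht
      _ ≤ M / t := by gcongr; exact Real.le_sqrt_of_sq_le (by linarith)
  have h0 : D y / √(y ^ 2 + a) = 0 := tendsto_nhds_unique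
    (tendsto_const_nhds.congr' ((eventually_gt_atTop 0).mono fun t ht => (hconst t ht).symm)) hlim
  simpa [(hsqrt y hy).ne'] using h0

section LaplaceFc

variable {c y : ℝ}

theorem aestronglyMeasurable_Fc (c : ℝ) : AEStronglyMeasurable (Fc c) (volume.restrict (Ioi 0)) :=
  continuousOn_Fc.aestronglyMeasurable measurableSet_Ioi

theorem integrableOn_exp_neg_mul_Fc (hc : 0 ≤ c) (hy : 0 < y) :
    IntegrableOn (fun θ => exp (-y * θ) * Fc c θ) (Ioi 0) :=
  integrableOn_exp_neg_mul_mul (aestronglyMeasurable_Fc c) (fun _ hθ => abs_Fc_le hc hθ.le) hy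

theorem sq_add_mul_laplaceTransform_mul_Fc (hc : 0 < c) (hy : 0 < y) :
    (y ^ 2 + 4 * c) * laplaceTransform (fun θ => θ * Fc c θ) y =
      2 * c - y * laplaceTransform (Fc c) y := by
  have hB : Continuous fun θ => θ * Fc c θ := by
    simp_rw [mul_Fc]
    exact continuous_const.mul (continuous_J1.comp (by fun_prop))
  have hA : Continuous fun θ => J0 (2 * θ * √c) := continuous_J0.comp (by fun_prop)
  have hdA_le (θ : ℝ) (hθ : 0 < θ) : |-2 * (θ * Fc c θ)| ≤ 2 * √c := by
    rw [abs_mul, abs_neg, abs_two]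
    exact mul_le_mul_of_nonneg_left (abs_mul_Fc_le hθ.le) zero_le_two
  have hLA := laplaceTransform_of_hasDerivAt hA.continuousWithinAt
    (fun θ _ => hasDerivAt_J0_two_mul_sqrt c θ) (fun θ hθ => abs_J0_le_one (by positivity))
    (hB.aestronglyMeasurable.const_mul (-2)) hdA_le hy
  have hcA_le (θ : ℝ) (hθ : 0 < θ) : |2 * c * J0 (2 * θ * √c)| ≤ 2 * c := by
    rw [abs_mul, abs_of_pos (by positivity : 0 < 2 * c)]
    exact mul_le_of_le_one_right (by positivity) (abs_J0_le_one (by positivity))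
  have hLB := laplaceTransform_of_hasDerivAt hB.continuousWithinAt
    (fun θ hθ => hasDerivAt_mul_Fc hc hθ.ne') (fun θ hθ => abs_mul_Fc_le hθ.le)
    ((hA.aestronglyMeasurable.const_mul (2 * c)).sub (aestronglyMeasurable_Fc c))
    (fun θ hθ => (abs_sub _ _).trans (add_le_add (hcA_le θ hθ) (abs_Fc_le hc.le hθ.le))) hy
  rw [laplaceTransform_const_mul] at hLA
  rw [laplaceTransform_sub
    (integrableOn_exp_neg_mul_mul (hA.aestronglyMeasurable.const_mul (2 * c)) hcA_le hy)
    (integrableOn_exp_neg_mul_Fc hc.le hy), laplaceTransform_const_mul] at hLB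
  simp only [J0_zero, mul_zero, zero_mul, sub_zero] at hLA hLB
  linear_combination (-y) * hLB - 2 * c * hLA

theorem hasDerivAt_laplaceTransform_Fc (hc : 0 < c) (hy : 0 < y) :
    HasDerivAt (laplaceTransform (Fc c))
      ((y * laplaceTransform (Fc c) y - 2 * c) / (y ^ 2 + 4 * c)) y := by
  refine (hasDerivAt_laplaceTransform (aestronglyMeasurable_Fc c)
    (fun θ hθ => abs_Fc_le hc.le hθ.le) (fun θ hθ => abs_mul_Fc_le hθ.le) hy).congr_deriv ?_
  rw [eq_div_iff (by positivity)]
  linear_combination -sq_add_mul_laplaceTransform_mul_Fc hc hy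

theorem hasDerivAt_neg_add_sqrt_div_two (hc : 0 < c) (y : ℝ) :
    HasDerivAt (fun y => (-y + √(y ^ 2 + 4 * c)) / 2)
      ((y * ((-y + √(y ^ 2 + 4 * c)) / 2) - 2 * c) / (y ^ 2 + 4 * c)) y := by
  have hpos : 0 < y ^ 2 + 4 * c := by positivity
  refine ((hasDerivAt_neg' y).add (((hasDerivAt_pow 2 y).add_const (4 * c)).sqrt
    hpos.ne')).div_const 2 |>.congr_deriv ?_
  field_simp
  linear_combination (-2 * y) * Real.sq_sqrt hpos.le

theorem abs_neg_add_sqrt_div_two_le (hc : 0 ≤ c) (hy : 0 ≤ y) :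
    |(-y + √(y ^ 2 + 4 * c)) / 2| ≤ √c := by
  have hs := Real.sq_sqrt (by positivity : 0 ≤ y ^ 2 + 4 * c)
  have hs' := Real.sq_sqrt hc
  have hs0 := Real.sqrt_nonneg (y ^ 2 + 4 * c)
  have hs0' := Real.sqrt_nonneg c
  rw [abs_le]
  constructor <;> nlinarith

end LaplaceFc

/-- Laplace transform computation in the proof of Theorem 3.2: for `c > 0` and `y > 0`,
`∫₀^∞ e^{-yθ} (√c/θ) J₁(2θ√c) dθ = (-y + √(y² + 4c))/2`. -/
theorem laplace_transform_Fc (c y : ℝ) (hc : 0 < c) (hy : 0 < y) :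
    IntegrableOn (fun θ : ℝ => Real.exp (-y * θ) * Fc c θ) (Set.Ici 0) ∧
    ∫ θ in Set.Ici (0 : ℝ), Real.exp (-y * θ) * Fc c θ =
      (-y + Real.sqrt (y ^ 2 + 4 * c)) / 2 := by
  refine ⟨(integrableOn_Ici_iff_integrableOn_Ioi).mpr (integrableOn_exp_neg_mul_Fc hc.le hy), ?_⟩
  rw [integral_Ici_eq_integral_Ioi]
  refine sub_eq_zero.mp (eq_zero_of_hasDerivAt_eq_mul_div_of_bounded (by positivity : 0 ≤ 4 * c)
    (D := fun y => laplaceTransform (Fc c) y - (-y + √(y ^ 2 + 4 * c)) / 2) (M := c + √c)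
    (fun t ht => ?_) (fun t ht => ?_) hy)
  · exact ((hasDerivAt_laplaceTransform_Fc hc ht).sub (hasDerivAt_neg_add_sqrt_div_two hc t))
      |>.congr_deriv (by ring)
  · have hL := abs_laplaceTransform_le (fun θ hθ => abs_Fc_le hc.le hθ.le) (by linarith : 0 < t)
    exact (abs_sub _ _).trans (add_le_add (hL.trans (div_le_self hc.le ht))
      (abs_neg_add_sqrt_div_two_le hc.le (by linarith)))
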